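/- Every finite supersolvable group admits a skew left brace structure of nilpotent type. -/

import Mathlib

/-- A group is supersolvable if it has a normal series (each term normal in the whole
group) with cyclic quotients; the quotient condition is expressed by a surjective
homomorphism onto a cyclic group `Multiplicative (ZMod m)` with kernel the previous
term. -/
def IsSupersolvableGroup (G : Type*) [Group G] : Prop :=
  ∃ (n : ℕ) (s : Fin (n + 1) → Subgroup G),
    s 0 = ⊥ ∧ s (Fin.last n) = ⊤ ∧
    (∀ i : Fin n, s i.castSucc ≤ s i.succ) ∧
    (∀ i : Fin (n + 1), (s i).Normal) ∧
    (∀ i : Fin n, ∃ (m : ℕ) (f : ↥(s i.succ) →* Multiplicative (ZMod m)),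
        Function.Surjective f ∧ f.ker = (s i.castSucc).subgroupOf (s i.succ))

/-!
Let `p` be the largest prime dividing `|G|`. Its Sylow subgroup is normal: the first nontrivial
term of the series is a cyclic normal subgroup, so `G` has a normal subgroup `N` of prime order
`q ≤ p`; by induction `G ⧸ N` has a normal Sylow `p`-subgroup, and in its preimage `K` the number
of Sylow `p`-subgroups is `≡ 1 [MOD p]` and divides `[K : P] ≤ q`, hence is `1`.
By Schur–Zassenhaus `G ≅ P ⋊ H` with `H` supersolvable and smaller, and a brace of nilpotent type
on `H` with additive group `A` extends to one on `P ⋊ H` with additive group `P × A`.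
-/

universe u

theorem MonoidHom.exists_surjective_zmod_ker_eq {K M : Type*} [Group K] [Group M] [IsCyclic M]
    (f : K →* M) :
    ∃ (m : ℕ) (g : K →* Multiplicative (ZMod m)), Function.Surjective g ∧ g.ker = f.ker := by
  let e := (zmodCyclicMulEquiv (inferInstance : IsCyclic f.range)).symm
  refine ⟨Nat.card f.range, (e : f.range →* _).comp f.rangeRestrict, ?_, by simp⟩
  exact e.surjective.comp f.rangeRestrict_surjective

theorem isCyclic_of_surjective_of_ker_le {K M Q : Type*} [Group K] [Group M] [Group Q]
    [IsCyclic M] {f : K →* M} (hf : Function.Surjective f) {g : K →* Q}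
    (hg : Function.Surjective g) (hker : f.ker ≤ g.ker) : IsCyclic Q := by
  have : IsCyclic (K ⧸ f.ker) :=
    (QuotientGroup.quotientKerEquivOfSurjective f hf).isCyclic.mpr inferInstance
  refine isCyclic_of_surjective (QuotientGroup.lift f.ker g hker) fun q => ?_
  obtain ⟨x, rfl⟩ := hg q
  exact ⟨x, rfl⟩

theorem IsCyclic.eq_ker_powMonoidHom_card {G : Type*} [CommGroup G] [IsCyclic G] [Finite G]
    (H : Subgroup G) : H = (powMonoidHom (Nat.card H) : G →* G).ker := by
  refine Subgroup.eq_of_le_of_card_ge (fun x hx => ?_) ?_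
  · exact congrArg Subtype.val (pow_card_eq_one' (G := H) (x := ⟨x, hx⟩))
  · rw [IsCyclic.card_powMonoidHom_ker, Nat.gcd_eq_right (Subgroup.card_subgroup_dvd_card H)]

theorem IsCyclic.subgroup_characteristic {G : Type*} [Group G] [IsCyclic G] [Finite G]
    (H : Subgroup G) : H.Characteristic := by
  let := IsCyclic.commGroup (α := G)
  refine Subgroup.characteristic_iff_map_eq.mpr fun ϕ => ?_
  have hϕH := IsCyclic.eq_ker_powMonoidHom_card (H.map ϕ.toMonoidHom)
  rw [Subgroup.card_map_of_injective ϕ.injective] at hϕH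
  exact hϕH.trans (IsCyclic.eq_ker_powMonoidHom_card H).symm

theorem Subgroup.exists_normal_card_eq_prime_of_isCyclic {G : Type*} [Group G] [Finite G]
    {N : Subgroup G} [N.Normal] [IsCyclic N] {q : ℕ} [Fact q.Prime] (hq : q ∣ Nat.card N) :
    ∃ Q : Subgroup G, Q.Normal ∧ Nat.card Q = q := by
  obtain ⟨Q, hQ⟩ := Sylow.exists_subgroup_card_pow_prime (G := N) q (n := 1) (by simpa using hq)
  have := IsCyclic.subgroup_characteristic Q
  exact ⟨Q.map N.subtype, inferInstance, by
    rw [Subgroup.card_map_of_injective N.subtype_injective, hQ, pow_one]⟩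

theorem Sylow.subsingleton_of_index_le {G : Type*} [Group G] [Finite G] {p : ℕ} [Fact p.Prime]
    (P : Sylow p G) (hP : (P : Subgroup G).index ≤ p) : Subsingleton (Sylow p G) := by
  have hle : Nat.card (Sylow p G) ≤ p :=
    (Nat.le_of_dvd (Nat.pos_of_ne_zero Subgroup.index_ne_zero_of_finite) P.card_dvd_index).trans hP
  have hmod : Nat.card (Sylow p G) % p = 1 % p := card_sylow_modEq_one p G
  rw [Nat.one_mod_eq_one.mpr (Fact.out : p.Prime).one_lt.ne'] at hmod
  rcases hle.lt_or_eq with hlt | heq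
  · rw [Nat.mod_eq_of_lt hlt] at hmod
    exact Finite.card_le_one_iff_subsingleton.mp hmod.le
  · simp [heq] at hmod

theorem Sylow.exists_normal_of_normal_quotient {G : Type*} [Group G] [Finite G] {p : ℕ}
    [hp : Fact p.Prime] {N : Subgroup G} [N.Normal] (hN : Nat.card N ≤ p)
    (P : Sylow p (G ⧸ N)) [(P : Subgroup (G ⧸ N)).Normal] :
    ∃ Q : Sylow p G, (Q : Subgroup G).Normal := by
  set K := (P : Subgroup (G ⧸ N)).comap (QuotientGroup.mk' N)
  obtain ⟨R⟩ : Nonempty (Sylow p K) := inferInstance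
  have hRK : (R : Subgroup K).index ∣ Nat.card N := by
    obtain ⟨k, hk⟩ := P.2.exists_card_eq
    refine Nat.Coprime.dvd_of_dvd_mul_right (n := Nat.card P) ?_ ?_
    · exact hk ▸ hp.out.coprime_pow_of_not_dvd R.not_dvd_index
    · exact QuotientGroup.card_preimage_mk N P ▸ Subgroup.index_dvd_card _
  have := R.subsingleton_of_index_le ((Nat.le_of_dvd Nat.card_pos hRK).trans hN)
  have hK : ¬ p ∣ K.index := by
    rw [Subgroup.index_comap_of_surjective _ (QuotientGroup.mk'_surjective N)]
    exact P.not_dvd_index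
  have hRG : ¬ p ∣ ((R : Subgroup K).map K.subtype).index := by
    rw [Subgroup.index_map_subtype, hp.out.dvd_mul]
    exact not_or_intro R.not_dvd_index hK
  exact ⟨(R.2.map K.subtype).toSylow hRG, by rw [IsPGroup.toSylow_coe]; infer_instance⟩

namespace IsSupersolvableGroup

variable {G : Type*} [Group G]

theorem exists_normal_isCyclic_ne_bot [Nontrivial G] (hG : IsSupersolvableGroup G) :
    ∃ N : Subgroup G, N.Normal ∧ IsCyclic N ∧ N ≠ ⊥ := by
  obtain ⟨n, s, h0, htop, -, hnorm, hcyc⟩ := hG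
  obtain ⟨i, hi, hi'⟩ : ∃ i : Fin n, s i.castSucc = ⊥ ∧ s i.succ ≠ ⊥ := by
    by_contra! h
    have hbot : ∀ i, s i = ⊥ := fun i => Fin.induction h0 (fun i hi => h i hi) i
    exact top_ne_bot (htop ▸ hbot (Fin.last n))
  obtain ⟨m, f, -, hker⟩ := hcyc i
  rw [hi, Subgroup.bot_subgroupOf] at hker
  exact ⟨s i.succ, hnorm _, isCyclic_of_injective f ((MonoidHom.ker_eq_bot_iff f).mp hker), hi'⟩

theorem subgroup (hG : IsSupersolvableGroup G) (H : Subgroup G) : IsSupersolvableGroup H := by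
  obtain ⟨n, s, h0, htop, hmono, hnorm, hcyc⟩ := hG
  refine ⟨n, fun i => (s i).subgroupOf H, by simp [h0], by simp [htop],
    fun i => Subgroup.subgroupOf_mono H (hmono i), fun i => (hnorm i).subgroupOf H, fun i => ?_⟩
  obtain ⟨m, f, -, hker⟩ := hcyc i
  let j : ((s i.succ).subgroupOf H : Subgroup H) →* s i.succ :=
    (H.subtype.comp (Subgroup.subtype _)).codRestrict _ fun x => x.2
  obtain ⟨m', g, hg, hgker⟩ := (f.comp j).exists_surjective_zmod_ker_eq
  refine ⟨m', g, hg, hgker.trans ?_⟩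
  ext x
  rw [MonoidHom.mem_ker, MonoidHom.comp_apply, ← MonoidHom.mem_ker, hker]
  exact Iff.rfl

theorem of_surjective {G' : Type*} [Group G'] (hG : IsSupersolvableGroup G) (π : G →* G')
    (hπ : Function.Surjective π) : IsSupersolvableGroup G' := by
  obtain ⟨n, s, h0, htop, hmono, hnorm, hcyc⟩ := hG
  refine ⟨n, fun i => (s i).map π, by simp [h0],
    by simp [htop, Subgroup.map_top_of_surjective π hπ], fun i => Subgroup.map_mono (hmono i),
    fun i => (hnorm i).map π hπ, fun i => ?_⟩
  obtain ⟨m, f, hf, hker⟩ := hcyc i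
  have := (hnorm i.castSucc).map π hπ
  let L := ((s i.castSucc).map π).subgroupOf ((s i.succ).map π)
  let g := (QuotientGroup.mk' L).comp (π.subgroupMap (s i.succ))
  have : IsCyclic (_ ⧸ L) := isCyclic_of_surjective_of_ker_le hf (g := g)
    ((QuotientGroup.mk'_surjective L).comp (π.subgroupMap_surjective _)) fun x hx => by
      rw [hker, Subgroup.mem_subgroupOf] at hx
      simp [g, L, MonoidHom.mem_ker, QuotientGroup.eq_one_iff, Subgroup.mem_subgroupOf,
        Subgroup.mem_map_of_mem π hx]
  simpa [L] using (QuotientGroup.mk' L).exists_surjective_zmod_ker_eq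

theorem exists_normal_card_prime [Finite G] [Nontrivial G] (hG : IsSupersolvableGroup G) :
    ∃ N : Subgroup G, N.Normal ∧ (Nat.card N).Prime := by
  obtain ⟨N, hN, hcyc, hbot⟩ := hG.exists_normal_isCyclic_ne_bot
  have hq : (Nat.card N).minFac.Prime := Nat.minFac_prime (mt Subgroup.card_eq_one.mp hbot)
  have := Fact.mk hq
  obtain ⟨Q, hQ, hcard⟩ :=
    Subgroup.exists_normal_card_eq_prime_of_isCyclic (N := N) (Nat.minFac_dvd _)
  exact ⟨Q, hQ, hcard ▸ hq⟩

theorem exists_normal_sylow [Finite G] (hG : IsSupersolvableGroup G) {p : ℕ} [Fact p.Prime]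
    (hp : ∀ q ∈ (Nat.card G).primeFactors, q ≤ p) : ∃ P : Sylow p G, (P : Subgroup G).Normal := by
  induction h : Nat.card G using Nat.strong_induction_on generalizing G with
  | _ n ih =>
  rcases subsingleton_or_nontrivial G with _ | _
  · obtain ⟨P⟩ : Nonempty (Sylow p G) := inferInstance
    exact ⟨P, by rw [Subsingleton.elim (P : Subgroup G) ⊤]; infer_instance⟩
  obtain ⟨N, hN, hNp⟩ := hG.exists_normal_card_prime
  have hNG : Nat.card N ∣ Nat.card G := N.card_subgroup_dvd_card
  have hQG : Nat.card (G ⧸ N) ∣ Nat.card G := ⟨_, N.card_eq_card_quotient_mul_card_subgroup⟩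
  have hQ : Nat.card (G ⧸ N) < n := by
    rw [← h, N.card_eq_card_quotient_mul_card_subgroup]
    exact lt_mul_of_one_lt_right Nat.card_pos hNp.one_lt
  obtain ⟨P, hP⟩ := ih _ hQ (hG.of_surjective _ (QuotientGroup.mk'_surjective N))
    (fun q hq => hp q (Nat.primeFactors_mono hQG Nat.card_pos.ne' hq)) rfl
  exact Sylow.exists_normal_of_normal_quotient
    (hp _ (Nat.mem_primeFactors.mpr ⟨hNp, hNG, Nat.card_pos.ne'⟩)) P

end IsSupersolvableGroup

/-- `e` transports the group law of `A` to the addition `+` of `G`; the identity is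
`a (b + c) = a b - a + a c`. -/
def HasNilpotentBrace (G : Type u) [Group G] : Prop :=
  ∃ (A : Type u) (_ : Group A) (_ : Group.IsNilpotent A) (e : G ≃ A),
    ∀ a b c : G,
      a * e.symm (e b * e c) = e.symm (e (a * b) * (e a)⁻¹ * e (a * c))

namespace HasNilpotentBrace

theorem of_isNilpotent (G : Type u) [Group G] [Group.IsNilpotent G] : HasNilpotentBrace G :=
  ⟨G, _, ‹_›, Equiv.refl G, fun a b c => by simp [mul_assoc]⟩

theorem of_mulEquiv {G G' : Type u} [Group G] [Group G'] (f : G ≃* G')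
    (hG : HasNilpotentBrace G) : HasNilpotentBrace G' := by
  obtain ⟨A, _, hA, e, he⟩ := hG
  refine ⟨A, _, hA, f.symm.toEquiv.trans e, fun a b c => ?_⟩
  simpa [map_mul] using congrArg f (he (f.symm a) (f.symm b) (f.symm c))

theorem semidirectProduct {N H : Type u} [Group N] [Group H] [Group.IsNilpotent N]
    (φ : H →* MulAut N) (hH : HasNilpotentBrace H) : HasNilpotentBrace (N ⋊[φ] H) := by
  obtain ⟨A, _, hA, e, he⟩ := hH
  refine ⟨N × A, _, inferInstance,
    SemidirectProduct.equivProd.trans ((Equiv.refl N).prodCongr e), fun a b c => ?_⟩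
  ext
  · simp [mul_assoc]
  · simpa using he a.right b.right c.right

theorem of_isComplement' {G : Type u} [Group G] {N H : Subgroup G} [N.Normal]
    [Group.IsNilpotent N] (hc : N.IsComplement' H) (hH : HasNilpotentBrace H) :
    HasNilpotentBrace G :=
  of_mulEquiv (SemidirectProduct.mulEquivSubgroup hc) (semidirectProduct _ hH)

end HasNilpotentBrace

theorem IsSupersolvableGroup.hasNilpotentBrace {G : Type u} [Group G] [Finite G]
    (hG : IsSupersolvableGroup G) : HasNilpotentBrace G := by
  induction h : Nat.card G using Nat.strong_induction_on generalizing G with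
  | _ n ih =>
  rcases subsingleton_or_nontrivial G with _ | _
  · exact HasNilpotentBrace.of_isNilpotent G
  have hne := Nat.nonempty_primeFactors.mpr (Finite.one_lt_card (α := G))
  obtain ⟨p, hpG, hmax⟩ :
      ∃ p ∈ (Nat.card G).primeFactors, ∀ q ∈ (Nat.card G).primeFactors, q ≤ p :=
    ⟨_, Finset.max'_mem _ hne, fun q hq => Finset.le_max' _ q hq⟩
  have := Fact.mk (Nat.prime_of_mem_primeFactors hpG)
  obtain ⟨P, hP⟩ := hG.exists_normal_sylow hmax
  obtain ⟨K, hK⟩ := Subgroup.exists_right_complement'_of_coprime P.card_coprime_index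
  have := P.2.isNilpotent
  have hKG : Nat.card K < n := by
    have hpP : p ∣ Nat.card P := P.dvd_card_of_dvd_card (Nat.dvd_of_mem_primeFactors hpG)
    have hP1 : 1 < Nat.card P :=
      (Fact.out : p.Prime).one_lt.trans_le (Nat.le_of_dvd Nat.card_pos hpP)
    rw [← h, ← hK.card_mul_card]
    exact lt_mul_of_one_lt_left Nat.card_pos hP1
  exact HasNilpotentBrace.of_isComplement' hK (ih _ hKG (hG.subgroup K) rfl)

/-- Every finite supersolvable group admits a skew left brace structure of nilpotent
type: there is a group operation `+` on `G` with `(G,+)` nilpotent (encoded by a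
nilpotent group `A` and a bijection `e : G ≃ A` transporting the operation) such that
`a(b+c) = ab - a + ac` for all `a, b, c ∈ G`. -/
theorem stmt14 {G : Type u} [Group G] [Finite G] (h : IsSupersolvableGroup G) :
    ∃ (A : Type u) (_ : Group A) (_ : Group.IsNilpotent A) (e : G ≃ A),
      ∀ a b c : G,
        a * e.symm (e b * e c) = e.symm (e (a * b) * (e a)⁻¹ * e (a * c)) :=
  h.hasNilpotentBrace
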